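/- Let T, T₁ be linear orders with order topologies and X a topological space. Suppose f : T × X → T₁ is such that every section x ↦ f(t,x) is continuous and every section t ↦ f(t,x) is both continuous and monotone. Then f is sequentially continuous on T × X: if (tₙ, xₙ) → (t₀, x₀), then f(tₙ, xₙ) → f(t₀, x₀). -/

import Mathlib

/-!
A section `t ↦ f t x` that is monotone or antitone maps `[p, q]` between its values at `p`
and `q`. Given `a < f t₀ x₀`, continuity in `t` yields `p ≤ t₀ ≤ q` with `[p, q]` a
neighbourhood of `t₀` and `a < f p x₀`, `a < f q x₀`; continuity in `x` at the two points `p`,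
`q` keeps these inequalities for `x` near `x₀`, hence `a < f t x` on a neighbourhood of
`(t₀, x₀)`. With the order dual of `T₁` for upper bounds, `f` is jointly continuous.
-/

open Filter Topology Set Function

section

variable {T T₁ X : Type*} [LinearOrder T] [TopologicalSpace T] [OrderTopology T]
  [LinearOrder T₁] [TopologicalSpace T₁] [OrderTopology T₁] [TopologicalSpace X]

theorem eventually_lt_uncurry_of_monotone_or_antitone {f : T → X → T₁} {t₀ : T} {x₀ : X}
    (hct : ContinuousAt (fun t => f t x₀) t₀) (hcx : ∀ t, ContinuousAt (f t) x₀)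
    (hm : ∀ᶠ x in 𝓝 x₀, Monotone (fun t => f t x) ∨ Antitone (fun t => f t x))
    {a : T₁} (ha : a < f t₀ x₀) : ∀ᶠ z in 𝓝 (t₀, x₀), a < uncurry f z := by
  obtain ⟨p, q, ⟨hpt₀, ht₀q⟩, hpq, hsub⟩ :=
    exists_Icc_mem_subset_of_mem_nhds (hct.eventually (eventually_gt_nhds ha))
  have hp : ∀ᶠ x in 𝓝 x₀, a < f p x :=
    (hcx p).eventually (eventually_gt_nhds (hsub ⟨le_rfl, hpt₀.trans ht₀q⟩))
  have hq : ∀ᶠ x in 𝓝 x₀, a < f q x :=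
    (hcx q).eventually (eventually_gt_nhds (hsub ⟨hpt₀.trans ht₀q, le_rfl⟩))
  filter_upwards [prod_mem_nhds hpq (hm.and (hp.and hq))]
    with ⟨t, x⟩ ⟨⟨hpt, htq⟩, hmono, hpx, hqx⟩
  rcases hmono with mono | anti
  · exact hpx.trans_le (mono hpt)
  · exact hqx.trans_le (anti htq)

theorem continuousAt_uncurry_of_monotone_or_antitone {f : T → X → T₁} {t₀ : T} {x₀ : X}
    (hct : ContinuousAt (fun t => f t x₀) t₀) (hcx : ∀ t, ContinuousAt (f t) x₀)
    (hm : ∀ᶠ x in 𝓝 x₀, Monotone (fun t => f t x) ∨ Antitone (fun t => f t x)) :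
    ContinuousAt (uncurry f) (t₀, x₀) := by
  have hm_dual : ∀ᶠ x in 𝓝 x₀, Monotone (fun t => OrderDual.toDual (f t x)) ∨
      Antitone (fun t => OrderDual.toDual (f t x)) :=
    hm.mono fun _ h => h.symm.imp Antitone.dual_right Monotone.dual_right
  exact tendsto_order.2
    ⟨fun _ => eventually_lt_uncurry_of_monotone_or_antitone hct hcx hm,
      fun _ => eventually_lt_uncurry_of_monotone_or_antitone (T₁ := T₁ᵒᵈ) hct hcx hm_dual⟩

end

theorem young_sequential {T T₁ X : Type*}
    [LinearOrder T] [TopologicalSpace T] [OrderTopology T]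
    [LinearOrder T₁] [TopologicalSpace T₁] [OrderTopology T₁]
    [TopologicalSpace X]
    (f : T → X → T₁)
    (hct : ∀ x, Continuous fun t => f t x)
    (hcx : ∀ t, Continuous fun x => f t x)
    (hm : ∀ x, Monotone (fun t => f t x) ∨ Antitone (fun t => f t x))
    (u : ℕ → T × X) (t₀ : T) (x₀ : X)
    (hu : Tendsto u atTop (𝓝 (t₀, x₀))) :
    Tendsto (fun n => f (u n).1 (u n).2) atTop (𝓝 (f t₀ x₀)) :=
  (continuousAt_uncurry_of_monotone_or_antitone (hct x₀).continuousAt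
    (fun t => (hcx t).continuousAt) (Eventually.of_forall hm)).tendsto.comp hu
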